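/- arXiv:math/0611564 — 2 statements merged into one kernel-verified Lean document; each statement's English description precedes it below -/
import Mathlib

section
/- For all ε > 0, σ_x > 0, σ_k > 0 and all Schwartz functions f, g : ℝ → ℂ, the smoothed Wigner transform of the pair (f, x·g(x)) satisfies, for every (x,k) ∈ ℝ²: W̃^{σ_x,σ_k;ε}[f, y·g(y)](x,k) = x·W̃^{σ_x,σ_k;ε}[f,g](x,k) − (iε/(4π))·∂_k W̃^{σ_x,σ_k;ε}[f,g](x,k) + (ε σ_x²/(4π))·∂_x W̃^{σ_x,σ_k;ε}[f,g](x,k). -/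
open Real MeasureTheory

/-- The scaled Wigner transform `W^ε[f,g](x,k) = ∫ e^{-2πiky} f(x+εy/2) conj(g(x-εy/2)) dy`. -/
noncomputable def wigner (ε : ℝ) (f g : ℝ → ℂ) (x k : ℝ) : ℂ :=
  ∫ y : ℝ, Complex.exp (-(2 * π * Complex.I * k * y)) *
    f (x + ε * y / 2) * (starRingEnd ℂ) (g (x - ε * y / 2))

/-- The smoothed Wigner transform: the Wigner transform convolved with the normalized Gaussian
kernel `(2/(ε σx σk)) exp(-2π(x-x')²/(ε σx²) - 2π(k-k')²/(ε σk²))`. -/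
noncomputable def swt (ε σx σk : ℝ) (f g : ℝ → ℂ) (x k : ℝ) : ℂ :=
  (2 / (ε * σx * σk) : ℂ) *
    ∫ x' : ℝ, ∫ k' : ℝ,
      (Real.exp (-(2 * π * (x - x')^2 / (ε * σx^2)) - 2 * π * (k - k')^2 / (ε * σk^2)) : ℂ) *
        wigner ε f g x' k'

/-!
Fubini and the Fourier transform of a Gaussian turn the `k'`-smoothing of the Fourier phase of the
Wigner integrand into a Gaussian in the Wigner variable `y`, so that the SWT equals
`C ∫∫ K(x,k;x',y) f(x' + εy/2) conj g(x' - εy/2) dx' dy` with the explicit kernel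
`K = exp(-a(x-x')²) exp(-d y²) exp(-2πiky)`. Replacing `g` by `y ↦ y g(y)` multiplies the integrand
by `x' - εy/2 = x - εy/2 - (x - x')`, and the last two terms are exactly what `∂ₖK = -2πiy K` and
`∂ₓK = -2a(x-x') K` produce (here `a = 2π/(εσx²)`, so `εσx²/(4π) · 2a = 1`). Gaussian domination
justifies differentiating under the integral.
-/

open Complex
open scoped SchwartzMap

theorem integral_gaussian_mul_cexp {b : ℝ} (hb : 0 < b) (k y : ℝ) :
    ∫ k' : ℝ, (rexp (-(b * (k' - k) ^ 2)) : ℂ) * cexp (-(2 * π * I * k' * y)) =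
      (√(π / b) * rexp (-(π ^ 2 / b * y ^ 2)) : ℝ) * cexp (-(2 * π * I * k * y)) := by
  rw [← integral_add_right_eq_self _ k]
  have hshift : ∀ u : ℝ,
      (rexp (-(b * (u + k - k) ^ 2)) : ℂ) * cexp (-(2 * π * I * ((u + k : ℝ) : ℂ) * y)) =
      (cexp (I * (-(2 * π * y) : ℂ) * u) * cexp (-b * u ^ 2)) * cexp (-(2 * π * I * k * y)) := by
    intro u
    rw [ofReal_exp, ← Complex.exp_add, ← Complex.exp_add, ← Complex.exp_add]
    push_cast
    ring_nf
  simp only [hshift, integral_mul_const]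
  rw [fourierIntegral_gaussian (by simpa using hb), Real.sqrt_eq_rpow, ofReal_mul,
    ofReal_cpow (by positivity), ofReal_exp]
  congr 2
  · push_cast; ring_nf
  · push_cast
    field_simp
    ring_nf

theorem integral_gaussian_mul_fourierIntegral {b : ℝ} (hb : 0 < b) {u : ℝ → ℂ} (hu : Integrable u)
    (k : ℝ) :
    ∫ k' : ℝ, (rexp (-(b * (k' - k) ^ 2)) : ℂ) * ∫ y : ℝ, cexp (-(2 * π * I * k' * y)) * u y =
      ∫ y : ℝ,
        (√(π / b) * rexp (-(π ^ 2 / b * y ^ 2)) : ℝ) * cexp (-(2 * π * I * k * y)) * u y := by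
  have hprod : Integrable (Function.uncurry fun k' y : ℝ =>
      (rexp (-(b * (k' - k) ^ 2)) : ℂ) * (cexp (-(2 * π * I * k' * y)) * u y))
      (volume.prod volume) := by
    refine (((integrable_exp_neg_mul_sq hb).comp_sub_right k).mul_prod hu.norm).mono' ?_
      (ae_of_all _ fun ⟨k', y⟩ => ?_)
    · have hu' := hu.aestronglyMeasurable.comp_snd (μ := (volume : Measure ℝ))
      have hcont : Continuous fun z : ℝ × ℝ =>
          (rexp (-(b * (z.1 - k) ^ 2)) : ℂ) * cexp (-(2 * π * I * z.1 * z.2)) := by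
        fun_prop
      exact (hcont.aestronglyMeasurable.mul hu').congr
        (ae_of_all _ fun ⟨_, _⟩ => by simp [mul_assoc])
    · simp [Complex.norm_exp, -Complex.ofReal_exp]
  simp_rw [← integral_const_mul]
  rw [integral_integral_swap hprod]
  simp_rw [← mul_assoc, integral_mul_const, integral_gaussian_mul_cexp hb]

theorem integrable_one_add_abs_mul_gaussian {c : ℝ} (hc : 0 < c) (a : ℝ) :
    Integrable fun t : ℝ => (1 + |a - t|) * rexp (-(c * (a - t) ^ 2)) := by
  have h : Integrable fun u : ℝ => rexp (-c * u ^ 2) + |u * rexp (-c * u ^ 2)| :=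
    (integrable_exp_neg_mul_sq hc).add (integrable_mul_exp_neg_mul_sq hc).abs
  refine (h.comp_sub_left a).congr (ae_of_all _ fun t => ?_)
  simp only [abs_mul, abs_of_pos (Real.exp_pos _), neg_mul]
  ring

noncomputable def gaussianEnvelope (a d x : ℝ) (p : ℝ × ℝ) : ℝ :=
  (1 + |x - p.1|) * rexp (-(a * (x - p.1) ^ 2)) * ((1 + |p.2|) * rexp (-(d * p.2 ^ 2)))

theorem integrable_gaussianEnvelope {a d : ℝ} (ha : 0 < a) (hd : 0 < d) (x : ℝ) :
    Integrable (gaussianEnvelope a d x) := by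
  rw [Measure.volume_eq_prod]
  exact (integrable_one_add_abs_mul_gaussian ha x).mul_prod
    (by simpa using integrable_one_add_abs_mul_gaussian hd 0)

theorem gaussianEnvelope_le_of_abs_sub_le_one {a : ℝ} (ha : 0 ≤ a) (d : ℝ) {x x' : ℝ}
    (hx : |x' - x| ≤ 1) (p : ℝ × ℝ) :
    gaussianEnvelope a d x' p ≤ 2 * rexp a * gaussianEnvelope (a / 2) d x p := by
  have hpoly : 1 + |x' - p.1| ≤ 2 * (1 + |x - p.1|) := by
    linarith [abs_sub_le x' x p.1, abs_nonneg (x - p.1)]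
  have hexp : rexp (-(a * (x' - p.1) ^ 2)) ≤ rexp a * rexp (-(a / 2 * (x - p.1) ^ 2)) := by
    have hxx : (x' - x) ^ 2 ≤ 1 := by
      rw [← sq_abs]; nlinarith [abs_nonneg (x' - x)]
    have hsq : (x - p.1) ^ 2 ≤ 2 * (x' - p.1) ^ 2 + 2 := by
      nlinarith [sq_nonneg (x' - p.1 + (x' - x))]
    rw [← Real.exp_add]
    gcongr
    nlinarith
  unfold gaussianEnvelope
  calc (1 + |x' - p.1|) * rexp (-(a * (x' - p.1) ^ 2)) * ((1 + |p.2|) * rexp (-(d * p.2 ^ 2)))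
      ≤ (2 * (1 + |x - p.1|)) * (rexp a * rexp (-(a / 2 * (x - p.1) ^ 2))) *
          ((1 + |p.2|) * rexp (-(d * p.2 ^ 2))) := by gcongr
    _ = _ := by ring

noncomputable def swtKernel (a d x k : ℝ) (p : ℝ × ℝ) : ℂ :=
  rexp (-(a * (x - p.1) ^ 2)) * rexp (-(d * p.2 ^ 2)) * cexp (-(2 * π * I * k * p.2))

theorem continuous_swtKernel (a d x k : ℝ) : Continuous (swtKernel a d x k) := by
  unfold swtKernel; fun_prop

theorem norm_swtKernel (a d x k : ℝ) (p : ℝ × ℝ) :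
    ‖swtKernel a d x k p‖ = rexp (-(a * (x - p.1) ^ 2)) * rexp (-(d * p.2 ^ 2)) := by
  simp [swtKernel, Complex.norm_exp, -Complex.ofReal_exp]

theorem hasDerivAt_swtKernel_snd (a d x k : ℝ) (p : ℝ × ℝ) :
    HasDerivAt (fun k' => swtKernel a d x k' p) (-(2 * π * I) * (p.2 * swtKernel a d x k p)) k := by
  have hform : (fun k' => swtKernel a d x k' p) = fun k' : ℝ =>
      (rexp (-(a * (x - p.1) ^ 2)) * rexp (-(d * p.2 ^ 2)) : ℂ) *
        cexp (-(2 * π * I * p.2) * k') := by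
    funext k'; unfold swtKernel; ring_nf
  rw [hform]
  refine (((hasDerivAt_id k).ofReal_comp.const_mul _).cexp.const_mul _).congr_deriv ?_
  simp only [swtKernel, id, ofReal_one]; ring_nf

theorem hasDerivAt_swtKernel_fst (a d x k : ℝ) (p : ℝ × ℝ) :
    HasDerivAt (fun x' => swtKernel a d x' k p)
      (-(2 * a) * ((x - p.1 : ℝ) * swtKernel a d x k p)) x := by
  have hform : (fun x' => swtKernel a d x' k p) = fun x' : ℝ =>
      (rexp (-(a * (x' - p.1) ^ 2)) : ℂ) *
        (rexp (-(d * p.2 ^ 2)) * cexp (-(2 * π * I * k * p.2))) := by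
    funext x'; unfold swtKernel; ring_nf
  have h := (((hasDerivAt_id x).sub_const p.1).pow 2).const_mul a |>.fun_neg
  simp only [id_eq, Pi.pow_apply] at h
  rw [hform]
  refine (h.exp.ofReal_comp.mul_const _).congr_deriv ?_
  simp only [swtKernel]; push_cast; ring

section KernelIntegrals

variable {a d : ℝ} {h : ℝ × ℝ → ℂ} {M : ℝ}

theorem aestronglyMeasurable_swtKernel_mul (hh : AEStronglyMeasurable h) (x k : ℝ) :
    AEStronglyMeasurable fun p => swtKernel a d x k p * h p :=
  (continuous_swtKernel a d x k).aestronglyMeasurable.mul hh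

theorem norm_mul_swtKernel_mul_le (hM : ∀ p, ‖h p‖ ≤ M) {w : ℝ × ℝ → ℂ} {C : ℝ} (x k : ℝ)
    {p : ℝ × ℝ} (hwC : ‖w p‖ ≤ C * ((1 + |x - p.1|) * (1 + |p.2|))) :
    ‖w p * (swtKernel a d x k p * h p)‖ ≤ C * M * gaussianEnvelope a d x p := by
  rw [norm_mul, norm_mul, norm_swtKernel]
  calc ‖w p‖ * (rexp (-(a * (x - p.1) ^ 2)) * rexp (-(d * p.2 ^ 2)) * ‖h p‖)
      ≤ C * ((1 + |x - p.1|) * (1 + |p.2|)) *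
          (rexp (-(a * (x - p.1) ^ 2)) * rexp (-(d * p.2 ^ 2)) * M) := by
        gcongr
        · exact (norm_nonneg _).trans hwC
        · exact hM p
    _ = _ := by unfold gaussianEnvelope; ring

theorem integrable_mul_swtKernel_mul (ha : 0 < a) (hd : 0 < d) (hh : AEStronglyMeasurable h)
    (hM : ∀ p, ‖h p‖ ≤ M) {w : ℝ × ℝ → ℂ} (hw : Continuous w) {C : ℝ} (x k : ℝ)
    (hwC : ∀ p, ‖w p‖ ≤ C * ((1 + |x - p.1|) * (1 + |p.2|))) :
    Integrable fun p => w p * (swtKernel a d x k p * h p) :=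
  ((integrable_gaussianEnvelope ha hd x).const_mul (C * M)).mono'
    (hw.aestronglyMeasurable.mul (aestronglyMeasurable_swtKernel_mul hh x k))
    (ae_of_all _ fun _ => norm_mul_swtKernel_mul_le hM x k (hwC _))

theorem integrable_swtKernel_mul (ha : 0 < a) (hd : 0 < d) (hh : AEStronglyMeasurable h)
    (hM : ∀ p, ‖h p‖ ≤ M) (x k : ℝ) :
    Integrable fun p => swtKernel a d x k p * h p := by
  simpa using integrable_mul_swtKernel_mul ha hd hh hM (w := 1) continuous_const (C := 1) x k
    fun p => by
      simp only [Pi.one_apply, norm_one, one_mul]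
      nlinarith [abs_nonneg (x - p.1), abs_nonneg p.2]

theorem hasDerivAt_integral_swtKernel_mul_snd (ha : 0 < a) (hd : 0 < d)
    (hh : AEStronglyMeasurable h) (hM : ∀ p, ‖h p‖ ≤ M) (x k : ℝ) :
    HasDerivAt (fun k' => ∫ p, swtKernel a d x k' p * h p)
      (-(2 * π * I) * ∫ p, (p.2 : ℂ) * (swtKernel a d x k p * h p)) k := by
  have hweight : ∀ p : ℝ × ℝ,
      ‖-(2 * π * I) * (p.2 : ℂ)‖ ≤ 2 * π * ((1 + |x - p.1|) * (1 + |p.2|)) := fun p => by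
    simp only [norm_mul, norm_neg, Complex.norm_I, Complex.norm_real, Real.norm_eq_abs,
      RCLike.norm_ofNat, mul_one, abs_of_pos pi_pos]
    have := mul_nonneg (abs_nonneg (x - p.1)) (abs_nonneg p.2)
    nlinarith [pi_pos, abs_nonneg (x - p.1), abs_nonneg p.2]
  have key := hasDerivAt_integral_of_dominated_loc_of_deriv_le (x₀ := k) Filter.univ_mem
    (F := fun k' p => swtKernel a d x k' p * h p)
    (F' := fun k' p => -(2 * π * I) * (p.2 : ℂ) * (swtKernel a d x k' p * h p))
    (Filter.Eventually.of_forall fun k' => aestronglyMeasurable_swtKernel_mul hh x k')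
    (integrable_swtKernel_mul ha hd hh hM x k)
    ((by fun_prop : Continuous fun p : ℝ × ℝ => -(2 * π * I) * (p.2 : ℂ)).aestronglyMeasurable.mul
      (aestronglyMeasurable_swtKernel_mul hh x k))
    (ae_of_all _ fun p k' _ =>
      norm_mul_swtKernel_mul_le hM (w := fun p => -(2 * π * I) * (p.2 : ℂ)) x k' (hweight p))
    ((integrable_gaussianEnvelope ha hd x).const_mul (2 * π * M))
    (ae_of_all _ fun p k' _ => ((hasDerivAt_swtKernel_snd a d x k' p).mul_const (h p)).congr_deriv
      (by ring))
  simpa only [mul_assoc, integral_const_mul] using key.2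

theorem hasDerivAt_integral_swtKernel_mul_fst (ha : 0 < a) (hd : 0 < d)
    (hh : AEStronglyMeasurable h) (hM : ∀ p, ‖h p‖ ≤ M) (x k : ℝ) :
    HasDerivAt (fun x' => ∫ p, swtKernel a d x' k p * h p)
      (-(2 * a) * ∫ p, ((x - p.1 : ℝ) : ℂ) * (swtKernel a d x k p * h p)) x := by
  have hweight : ∀ (x' : ℝ) (p : ℝ × ℝ), ‖-(2 * a) * ((x' - p.1 : ℝ) : ℂ)‖ ≤
      2 * a * ((1 + |x' - p.1|) * (1 + |p.2|)) := fun x' p => by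
    simp only [norm_mul, norm_neg, Complex.norm_real, Real.norm_eq_abs, RCLike.norm_ofNat,
      abs_of_pos ha]
    have := mul_nonneg (abs_nonneg (x' - p.1)) (abs_nonneg p.2)
    nlinarith [abs_nonneg (x' - p.1), abs_nonneg p.2]
  have hbound : ∀ p, ∀ x' ∈ Metric.ball x 1,
      ‖-(2 * a) * ((x' - p.1 : ℝ) : ℂ) * (swtKernel a d x' k p * h p)‖ ≤
        2 * a * M * (2 * rexp a * gaussianEnvelope (a / 2) d x p) := fun p x' hx' => by
    have hM0 : 0 ≤ M := (norm_nonneg _).trans (hM p)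
    refine (norm_mul_swtKernel_mul_le hM (w := fun p => -(2 * a) * ((x' - p.1 : ℝ) : ℂ)) x' k
      (hweight x' p)).trans ?_
    gcongr
    exact gaussianEnvelope_le_of_abs_sub_le_one ha.le d (mem_ball_iff_norm.1 hx').le p
  have key := hasDerivAt_integral_of_dominated_loc_of_deriv_le (x₀ := x)
    (Metric.ball_mem_nhds x one_pos)
    (F := fun x' p => swtKernel a d x' k p * h p)
    (F' := fun x' p => -(2 * a) * ((x' - p.1 : ℝ) : ℂ) * (swtKernel a d x' k p * h p))
    (Filter.Eventually.of_forall fun x' => aestronglyMeasurable_swtKernel_mul hh x' k)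
    (integrable_swtKernel_mul ha hd hh hM x k)
    ((by fun_prop : Continuous fun p : ℝ × ℝ => -(2 * a) * ((x - p.1 : ℝ) : ℂ)).aestronglyMeasurable
      |>.mul (aestronglyMeasurable_swtKernel_mul hh x k))
    (ae_of_all _ hbound)
    (((integrable_gaussianEnvelope (half_pos ha) hd x).const_mul _).const_mul _)
    (ae_of_all _ fun p x' _ => ((hasDerivAt_swtKernel_fst a d x' k p).mul_const (h p)).congr_deriv
      (by ring))
  simpa only [mul_assoc, integral_const_mul] using key.2

theorem integral_mul_swtKernel_mul_eq (ha : 0 < a) (hd : 0 < d) (hh : AEStronglyMeasurable h)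
    (hM : ∀ p, ‖h p‖ ≤ M) (ε x k : ℝ) :
    ∫ p, ((p.1 - ε * p.2 / 2 : ℝ) : ℂ) * (swtKernel a d x k p * h p) =
      x * (∫ p, swtKernel a d x k p * h p)
        - ε / 2 * (∫ p, (p.2 : ℂ) * (swtKernel a d x k p * h p))
        - ∫ p, ((x - p.1 : ℝ) : ℂ) * (swtKernel a d x k p * h p) := by
  have hsnd : Integrable fun p : ℝ × ℝ => (p.2 : ℂ) * (swtKernel a d x k p * h p) :=
    integrable_mul_swtKernel_mul ha hd hh hM (by fun_prop) (C := 1) x k fun p => by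
      rw [Complex.norm_real, Real.norm_eq_abs, one_mul]
      nlinarith [abs_nonneg (x - p.1), abs_nonneg p.2]
  have hfst : Integrable fun p : ℝ × ℝ => ((x - p.1 : ℝ) : ℂ) * (swtKernel a d x k p * h p) :=
    integrable_mul_swtKernel_mul ha hd hh hM (by fun_prop) (C := 1) x k fun p => by
      rw [Complex.norm_real, Real.norm_eq_abs, one_mul]
      nlinarith [abs_nonneg (x - p.1), abs_nonneg p.2]
  rw [← integral_const_mul, ← integral_const_mul, ← integral_sub, ← integral_sub]
  · refine integral_congr_ae (ae_of_all _ fun p => ?_)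
    push_cast
    ring
  · exact ((integrable_swtKernel_mul ha hd hh hM x k).const_mul _).sub (hsnd.const_mul _)
  · exact hfst
  · exact (integrable_swtKernel_mul ha hd hh hM x k).const_mul _
  · exact hsnd.const_mul _

end KernelIntegrals

noncomputable def wignerIntegrand (ε : ℝ) (f g : ℝ → ℂ) (p : ℝ × ℝ) : ℂ :=
  f (p.1 + ε * p.2 / 2) * starRingEnd ℂ (g (p.1 - ε * p.2 / 2))

theorem wigner_eq_integral_wignerIntegrand (ε : ℝ) (f g : ℝ → ℂ) (x k : ℝ) :
    wigner ε f g x k = ∫ y : ℝ, cexp (-(2 * π * I * k * y)) * wignerIntegrand ε f g (x, y) := by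
  simp only [wigner, wignerIntegrand, mul_assoc]

namespace SchwartzMap

variable (ε : ℝ) (f g : 𝓢(ℝ, ℂ))

theorem continuous_wignerIntegrand : Continuous (wignerIntegrand ε f g) := by
  unfold wignerIntegrand; fun_prop

theorem norm_wignerIntegrand_le (p : ℝ × ℝ) :
    ‖wignerIntegrand ε f g p‖ ≤ SchwartzMap.seminorm ℂ 0 0 f * SchwartzMap.seminorm ℂ 0 0 g := by
  rw [wignerIntegrand, norm_mul, RCLike.norm_conj]
  exact mul_le_mul (norm_le_seminorm ℂ f _) (norm_le_seminorm ℂ g _) (norm_nonneg _)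
    (apply_nonneg _ _)

theorem integrable_wignerIntegrand_slice {ε : ℝ} (hε : ε ≠ 0) (x : ℝ) :
    Integrable fun y => wignerIntegrand ε f g (x, y) := by
  have hf : Integrable fun y : ℝ => f (x + ε * y / 2) := by
    simpa only [mul_div_right_comm] using
      (f.integrable.comp_add_left x).comp_mul_left' (R := ε / 2) (div_ne_zero hε two_ne_zero)
  refine hf.mul_bdd (c := SchwartzMap.seminorm ℂ 0 0 g) (by fun_prop) (ae_of_all _ fun y => ?_)
  rw [RCLike.norm_conj]
  exact norm_le_seminorm ℂ g _

theorem ofReal_mul_eq_smulLeftCLM :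
    (fun y : ℝ => (y : ℂ) * g y) = smulLeftCLM ℂ (fun t : ℝ => (t : ℂ)) g := by
  ext y
  simp [smulLeftCLM_apply_apply Function.Complex.hasTemperateGrowth_ofReal]

end SchwartzMap

theorem wignerIntegrand_ofReal_mul_right (ε : ℝ) (f g : ℝ → ℂ) (p : ℝ × ℝ) :
    wignerIntegrand ε f (fun y => (y : ℂ) * g y) p =
      ((p.1 - ε * p.2 / 2 : ℝ) : ℂ) * wignerIntegrand ε f g p := by
  simp only [wignerIntegrand, map_mul, conj_ofReal]
  ring

theorem swt_eq_integral_swtKernel_mul {ε σx σk : ℝ} (hε : 0 < ε) (hσx : 0 < σx) (hσk : 0 < σk)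
    (f g : 𝓢(ℝ, ℂ)) (x k : ℝ) :
    swt ε σx σk f g x k = (2 / (ε * σx * σk) : ℂ) * √(ε * σk ^ 2 / 2) *
      ∫ p, swtKernel (2 * π / (ε * σx ^ 2)) (π * ε * σk ^ 2 / 2) x k p *
        wignerIntegrand ε f g p := by
  have hb : 0 < 2 * π / (ε * σk ^ 2) := by positivity
  have hslice : ∀ x' : ℝ, ∫ k' : ℝ,
      (rexp (-(2 * π * (x - x') ^ 2 / (ε * σx ^ 2)) - 2 * π * (k - k') ^ 2 / (ε * σk ^ 2)) : ℂ) *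
        wigner ε f g x' k' =
      ∫ y : ℝ, (√(ε * σk ^ 2 / 2) : ℂ) * (swtKernel (2 * π / (ε * σx ^ 2)) (π * ε * σk ^ 2 / 2)
        x k (x', y) * wignerIntegrand ε f g (x', y)) := by
    intro x'
    have hsplit : ∀ k' : ℝ,
        (rexp (-(2 * π * (x - x') ^ 2 / (ε * σx ^ 2)) - 2 * π * (k - k') ^ 2 / (ε * σk ^ 2)) : ℂ) *
          wigner ε f g x' k' = rexp (-(2 * π / (ε * σx ^ 2) * (x - x') ^ 2)) *
          ((rexp (-(2 * π / (ε * σk ^ 2) * (k' - k) ^ 2)) : ℂ) *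
            ∫ y : ℝ, cexp (-(2 * π * I * k' * y)) * wignerIntegrand ε f g (x', y)) := fun k' => by
      rw [wigner_eq_integral_wignerIntegrand, ← mul_assoc, ← ofReal_mul, ← Real.exp_add]
      ring_nf
    have hπb : π / (2 * π / (ε * σk ^ 2)) = ε * σk ^ 2 / 2 := by field_simp
    have hπ2b : π ^ 2 / (2 * π / (ε * σk ^ 2)) = π * ε * σk ^ 2 / 2 := by field_simp
    simp only [hsplit]
    rw [integral_const_mul, integral_gaussian_mul_fourierIntegral hb
      (f.integrable_wignerIntegrand_slice g hε.ne' x'), ← integral_const_mul]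
    refine integral_congr_ae (ae_of_all _ fun y => ?_)
    simp only [swtKernel, hπb, hπ2b]
    push_cast
    ring
  have hint : Integrable (Function.uncurry fun x' y =>
      swtKernel (2 * π / (ε * σx ^ 2)) (π * ε * σk ^ 2 / 2) x k (x', y) *
        wignerIntegrand ε f g (x', y)) (volume.prod volume) := by
    rw [← Measure.volume_eq_prod]
    exact integrable_swtKernel_mul (by positivity) (by positivity)
      (f.continuous_wignerIntegrand ε g).aestronglyMeasurable (f.norm_wignerIntegrand_le ε g) x k
  simp only [swt, hslice, integral_const_mul]
  rw [integral_integral hint, Measure.volume_eq_prod]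
  exact (mul_assoc _ _ _).symm

theorem hasDerivAt_swt_snd {ε σx σk : ℝ} (hε : 0 < ε) (hσx : 0 < σx) (hσk : 0 < σk)
    (f g : 𝓢(ℝ, ℂ)) (x k : ℝ) :
    HasDerivAt (fun k' => swt ε σx σk f g x k')
      ((2 / (ε * σx * σk) : ℂ) * √(ε * σk ^ 2 / 2) * (-(2 * π * I) *
        ∫ p, (p.2 : ℂ) * (swtKernel (2 * π / (ε * σx ^ 2)) (π * ε * σk ^ 2 / 2) x k p *
          wignerIntegrand ε f g p))) k := by
  simp only [swt_eq_integral_swtKernel_mul hε hσx hσk f g]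
  exact (hasDerivAt_integral_swtKernel_mul_snd (by positivity) (by positivity)
    (f.continuous_wignerIntegrand ε g).aestronglyMeasurable (f.norm_wignerIntegrand_le ε g)
    x k).const_mul _

theorem hasDerivAt_swt_fst {ε σx σk : ℝ} (hε : 0 < ε) (hσx : 0 < σx) (hσk : 0 < σk)
    (f g : 𝓢(ℝ, ℂ)) (x k : ℝ) :
    HasDerivAt (fun x' => swt ε σx σk f g x' k)
      ((2 / (ε * σx * σk) : ℂ) * √(ε * σk ^ 2 / 2) * (-(2 * ((2 * π / (ε * σx ^ 2) : ℝ) : ℂ)) *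
        ∫ p, ((x - p.1 : ℝ) : ℂ) * (swtKernel (2 * π / (ε * σx ^ 2)) (π * ε * σk ^ 2 / 2) x k p *
          wignerIntegrand ε f g p))) x := by
  simp only [swt_eq_integral_swtKernel_mul hε hσx hσk f g]
  exact (hasDerivAt_integral_swtKernel_mul_fst (by positivity) (by positivity)
    (f.continuous_wignerIntegrand ε g).aestronglyMeasurable (f.norm_wignerIntegrand_le ε g)
    x k).const_mul _

/-- Identity (3b): the SWT of `(f, y·g(y))` in terms of the SWT of `(f,g)` and its
phase-space derivatives. -/
theorem swt_mul_right (ε σx σk : ℝ) (hε : 0 < ε) (hσx : 0 < σx) (hσk : 0 < σk)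
    (f g : SchwartzMap ℝ ℂ) (x k : ℝ) :
    swt ε σx σk (⇑f) (fun y => (y : ℂ) * g y) x k =
      (x : ℂ) * swt ε σx σk (⇑f) (⇑g) x k
      - Complex.I * ε / (4 * π) * deriv (fun k' => swt ε σx σk (⇑f) (⇑g) x k') k
      + (ε * σx ^ 2 / (4 * π) : ℂ) * deriv (fun x' => swt ε σx σk (⇑f) (⇑g) x' k) x := by
  rw [g.ofReal_mul_eq_smulLeftCLM, swt_eq_integral_swtKernel_mul hε hσx hσk,
    swt_eq_integral_swtKernel_mul hε hσx hσk, ← g.ofReal_mul_eq_smulLeftCLM,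
    (hasDerivAt_swt_snd hε hσx hσk f g x k).deriv, (hasDerivAt_swt_fst hε hσx hσk f g x k).deriv]
  simp only [wignerIntegrand_ofReal_mul_right, mul_left_comm (swtKernel _ _ x k _)]
  rw [integral_mul_swtKernel_mul_eq (by positivity) (by positivity)
    (f.continuous_wignerIntegrand ε g).aestronglyMeasurable (f.norm_wignerIntegrand_le ε g)]
  generalize (∫ p : ℝ × ℝ, swtKernel _ _ x k p * _) = J₀
  generalize (∫ p : ℝ × ℝ, (p.2 : ℂ) * _) = J₂
  generalize (∫ p : ℝ × ℝ, ((x - p.1 : ℝ) : ℂ) * _) = J₁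
  generalize (2 / (ε * σx * σk) : ℂ) * √(ε * σk ^ 2 / 2) = C
  have hk : I * ε / (4 * π) * (-(2 * π * I)) = ε / 2 := by
    rw [show I * ε / (4 * π) * (-(2 * π * I)) = -I ^ 2 * ε / 2 by field_simp; ring, I_sq]
    ring
  have hx : (ε * σx ^ 2 / (4 * π) : ℂ) * (-(2 * ((2 * π / (ε * σx ^ 2) : ℝ) : ℂ))) = -1 := by
    have : (ε : ℂ) ≠ 0 := ofReal_ne_zero.2 hε.ne'
    have : (σx : ℂ) ≠ 0 := ofReal_ne_zero.2 hσx.ne'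
    push_cast
    field_simp
    ring
  linear_combination (C * J₂) * hk - (C * J₁) * hx
end

section
/- Exact Liouville equation for the Wigner transform under a quadratic potential: let ε > 0, let V(x) = a x² + b x + c with a, b, c ∈ ℝ, and let u : ℝ × ℝ → ℂ be smooth, Schwartz in x for each t with all Schwartz seminorms (in x, of u and of ∂_t u) locally bounded in t, satisfying ε ∂_t u(x,t) − i(ε²/2) ∂²_x u(x,t) + i V(x) u(x,t) = 0 for all (x,t). Then W(x,k,t) := W^ε[u(·,t)](x,k) satisfies exactly ∂_t W + 2πk ∂_x W − (V'(x)/(2π)) ∂_k W = 0 for all (x,k,t), where V'(x) = 2ax + b. -/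
open Real MeasureTheory


private lemma one_add_pow_le (z : ℝ) (hz : 0 ≤ z) (n : ℕ) : (1+z)^n ≤ 2^n * (1+z^n) := by
  rcases le_total z 1 with h | h
  · have h1 : (1+z)^n ≤ 2^n := pow_le_pow_left₀ (by linarith) (by linarith) n
    have h2 : (2:ℝ)^n ≤ 2^n * (1+z^n) := by
      have h3 : (0:ℝ) ≤ z^n := pow_nonneg hz n
      nlinarith [pow_pos (zero_lt_two (α := ℝ)) n]
    linarith
  · have h1 : (1+z)^n ≤ (2*z)^n := pow_le_pow_left₀ (by linarith) (by linarith) n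
    have h2 : (2*z:ℝ)^n = 2^n * z^n := mul_pow 2 z n
    have h3 : (2:ℝ)^n * z^n ≤ 2^n*(1+z^n) := by
      nlinarith [pow_pos (zero_lt_two (α := ℝ)) n, pow_nonneg hz n]
    linarith

private lemma decay_of_schwartz (v : ℝ → ℝ → ℂ)
    (hv : ∀ n m : ℕ, ∀ T : ℝ, ∃ C : ℝ, ∀ t x : ℝ, |t| ≤ T →
      |x| ^ n * ‖iteratedDeriv m (fun x' => v x' t) x‖ ≤ C) :
    ∀ m n : ℕ, ∀ T : ℝ, ∃ C : ℝ, 0 ≤ C ∧ ∀ t x : ℝ, |t| ≤ T →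
      ‖iteratedDeriv m (fun x' => v x' t) x‖ * (1+|x|)^n ≤ C := by
  intro m n T
  obtain ⟨C0, hC0⟩ := hv 0 m T
  obtain ⟨Cn, hCn⟩ := hv n m T
  refine ⟨max (2^n * (C0 + Cn)) 0, le_max_right _ _, fun t x ht => ?_⟩
  have h1 := hC0 t x ht
  simp only [pow_zero, one_mul] at h1
  have h2 := hCn t x ht
  have h3 := one_add_pow_le |x| (abs_nonneg x) n
  have h4 : ‖iteratedDeriv m (fun x' => v x' t) x‖ * (1+|x|)^n
      ≤ ‖iteratedDeriv m (fun x' => v x' t) x‖ * (2^n * (1+|x|^n)) :=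
    mul_le_mul_of_nonneg_left h3 (norm_nonneg _)
  have hp : (0:ℝ) < 2^n := pow_pos zero_lt_two n
  have h5 : ‖iteratedDeriv m (fun x' => v x' t) x‖ * (2^n * (1+|x|^n)) ≤ 2^n * (C0 + Cn) := by
    nlinarith [norm_nonneg (iteratedDeriv m (fun x' => v x' t) x)]
  exact le_max_of_le_left (h4.trans h5)

private lemma two_point_bound {ε : ℝ} (hε : 0 < ε) (n : ℕ) {A B : ℝ → ℂ} {CA CB : ℝ}
    (hA : ∀ z, ‖A z‖ * (1+|z|)^n ≤ CA) (hB : ∀ z, ‖B z‖ * (1+|z|)^n ≤ CB) (x' y : ℝ) :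
    ‖A (x' + ε*y/2)‖ * ‖B (x' - ε*y/2)‖ * (1 + ε*|y|/2)^n ≤ CA * CB := by
  have hone : ∀ z : ℝ, (1:ℝ) ≤ (1+|z|)^n := by
    intro z
    calc (1:ℝ) = 1^n := (one_pow n).symm
    _ ≤ (1+|z|)^n := pow_le_pow_left₀ zero_le_one (by linarith [abs_nonneg z]) n
  have hCA : 0 ≤ CA := le_trans (by positivity) (hA 0)
  have hCB : 0 ≤ CB := le_trans (by positivity) (hB 0)
  have hA0 : ∀ z, ‖A z‖ ≤ CA := fun z =>
    le_trans (le_mul_of_one_le_right (norm_nonneg _) (hone z)) (hA z)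
  have hB0 : ∀ z, ‖B z‖ ≤ CB := fun z =>
    le_trans (le_mul_of_one_le_right (norm_nonneg _) (hone z)) (hB z)
  have hsum : ε * |y| ≤ |x'+ε*y/2| + |x'-ε*y/2| := by
    have h1 : (x'+ε*y/2) - (x'-ε*y/2) = ε*y := by ring
    calc ε*|y| = |ε*y| := by rw [abs_mul, abs_of_pos hε]
    _ = |(x'+ε*y/2) - (x'-ε*y/2)| := by rw [h1]
    _ ≤ |x'+ε*y/2| + |x'-ε*y/2| := abs_sub _ _
  rcases le_total (ε*|y|/2) |x'+ε*y/2| with h | h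
  · have hp : (1+ε*|y|/2)^n ≤ (1+|x'+ε*y/2|)^n :=
      pow_le_pow_left₀ (by positivity) (by linarith) n
    calc ‖A (x'+ε*y/2)‖ * ‖B (x'-ε*y/2)‖ * (1 + ε*|y|/2)^n
        = (‖A (x'+ε*y/2)‖ * (1+ε*|y|/2)^n) * ‖B (x'-ε*y/2)‖ := by ring
    _ ≤ (‖A (x'+ε*y/2)‖ * (1+|x'+ε*y/2|)^n) * ‖B (x'-ε*y/2)‖ :=
        mul_le_mul_of_nonneg_right (mul_le_mul_of_nonneg_left hp (norm_nonneg _)) (norm_nonneg _)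
    _ ≤ CA * CB := mul_le_mul (hA _) (hB0 _) (norm_nonneg _) hCA
  · have h' : ε*|y|/2 ≤ |x'-ε*y/2| := by linarith
    have hp : (1+ε*|y|/2)^n ≤ (1+|x'-ε*y/2|)^n :=
      pow_le_pow_left₀ (by positivity) (by linarith) n
    calc ‖A (x'+ε*y/2)‖ * ‖B (x'-ε*y/2)‖ * (1 + ε*|y|/2)^n
        = ‖A (x'+ε*y/2)‖ * (‖B (x'-ε*y/2)‖ * (1+ε*|y|/2)^n) := by ring
    _ ≤ ‖A (x'+ε*y/2)‖ * (‖B (x'-ε*y/2)‖ * (1+|x'-ε*y/2|)^n) :=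
        mul_le_mul_of_nonneg_left (mul_le_mul_of_nonneg_left hp (norm_nonneg _)) (norm_nonneg _)
    _ ≤ CA * CB := mul_le_mul (hA0 _) (hB _) (by positivity) hCA

private lemma bound_convert0 {ε w C P : ℝ} (hε : 0 < ε) (hP : 0 ≤ P)
    (h : P * (1 + ε*|w|/2)^3 ≤ C) : P ≤ C * (1 + (ε/2*w)^2)⁻¹ := by
  have hx : (0:ℝ) < 1+(ε/2*w)^2 := by positivity
  have hgoal : P * (1 + (ε/2*w)^2) ≤ C := ?_
  · calc P = (P * (1+(ε/2*w)^2)) * (1+(ε/2*w)^2)⁻¹ := by field_simp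
    _ ≤ C * (1+(ε/2*w)^2)⁻¹ := mul_le_mul_of_nonneg_right hgoal (by positivity)
  have hsq : (ε/2*w)^2 = (ε*|w|/2)^2 := by
    rw [show ε/2*w = ε*w/2 by ring, div_pow, div_pow, mul_pow, mul_pow, sq_abs]
  have key : (1+(ε/2*w)^2) ≤ (1+ε*|w|/2)^3 := by
    rw [hsq]
    set s := ε*|w|/2 with hs
    have hs0 : 0 ≤ s := by positivity
    nlinarith [hs0, mul_nonneg hs0 hs0, mul_nonneg (mul_nonneg hs0 hs0) hs0]
  calc P * (1+(ε/2*w)^2) ≤ P * (1+ε*|w|/2)^3 := mul_le_mul_of_nonneg_left key hP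
  _ ≤ C := h

private lemma bound_convert1 {ε w C P : ℝ} (hε : 0 < ε) (hP : 0 ≤ P)
    (h : P * (1 + ε*|w|/2)^3 ≤ C) : |w| * P ≤ (2/ε*C) * (1 + (ε/2*w)^2)⁻¹ := by
  have hx : (0:ℝ) < 1+(ε/2*w)^2 := by positivity
  have hC : 0 ≤ C := le_trans (by positivity) h
  have hsq : (ε/2*w)^2 = (ε*|w|/2)^2 := by
    rw [show ε/2*w = ε*w/2 by ring, div_pow, div_pow, mul_pow, mul_pow, sq_abs]
  have key : ε * (|w| * (1+(ε/2*w)^2)) ≤ 2 * (1+ε*|w|/2)^3 := by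
    rw [hsq]
    have hw : ε * |w| = 2 * (ε*|w|/2) := by ring
    set s := ε*|w|/2 with hs
    have hs0 : 0 ≤ s := by positivity
    have hkey : ε * (|w| * (1 + s^2)) = 2*s + 2*s*s^2 := by linear_combination (1+s^2)*hw
    rw [hkey]
    nlinarith [hs0, mul_nonneg hs0 hs0, mul_nonneg (mul_nonneg hs0 hs0) hs0]
  have main : |w| * P * (1 + (ε/2*w)^2) * ε ≤ 2 * C := by
    calc |w| * P * (1 + (ε/2*w)^2) * ε = P * (ε * (|w| * (1+(ε/2*w)^2))) := by ring
    _ ≤ P * (2 * (1+ε*|w|/2)^3) := mul_le_mul_of_nonneg_left key hP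
    _ = 2 * (P * (1+ε*|w|/2)^3) := by ring
    _ ≤ 2 * C := by linarith
  have main2 : |w| * P * (1 + (ε/2*w)^2) ≤ 2/ε*C := by
    rw [show (2/ε*C) = 2*C/ε from by ring, le_div_iff₀ hε]
    linarith [main]
  calc |w| * P = (|w| * P * (1+(ε/2*w)^2)) * (1+(ε/2*w)^2)⁻¹ := by field_simp
  _ ≤ (2/ε*C) * (1+(ε/2*w)^2)⁻¹ := mul_le_mul_of_nonneg_right main2 (by positivity)

private lemma integrable_decay {ε : ℝ} (hε : 0 < ε) (M : ℝ) :
    Integrable (fun y : ℝ => M * (1 + (ε/2*y)^2)⁻¹) :=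
  (integrable_inv_one_add_sq.comp_mul_left' (by positivity : (ε/2) ≠ 0)).const_mul M

private lemma norm_exp_wig (k' y : ℝ) : ‖Complex.exp (-(2*π*Complex.I*k'*y))‖ = 1 := by
  rw [Complex.norm_exp]
  have : (-(2*π*Complex.I*(k':ℂ)*(y:ℂ))).re = 0 := by simp
  rw [this, Real.exp_zero]

private lemma integrable_of_decay_bound {f : ℝ → ℂ} {ε M : ℝ} (hε : 0 < ε) (hf : Continuous f)
    (h : ∀ y, ‖f y‖ ≤ M * (1 + (ε/2*y)^2)⁻¹) : Integrable f :=
  (integrable_decay hε M).mono' hf.aestronglyMeasurable (Filter.Eventually.of_forall h)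

set_option maxHeartbeats 1000000 in
/-- Exact Liouville equation for the Wigner transform of a solution of the Schrödinger equation
`ε ∂_t u - i(ε²/2) ∂²_x u + i V(x) u = 0` with quadratic potential `V(x) = a x² + b x + c`:
setting `W(x,k,t) = W^ε[u(·,t)](x,k)`, one has `∂_t W + 2πk ∂_x W - (V'(x)/(2π)) ∂_k W = 0`
exactly, where `V'(x) = 2ax + b`. The hypotheses state that `u` is smooth on `ℝ × ℝ`, Schwartz
in `x` for each `t`, with all Schwartz seminorms of `u(·,t)` and `∂_t u(·,t)` locally bounded
in `t`. -/
theorem wigner_quadratic_liouville (ε : ℝ) (hε : 0 < ε) (a b c : ℝ) (u : ℝ → ℝ → ℂ)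
    (hu_smooth : ContDiff ℝ (⊤ : ℕ∞) (fun p : ℝ × ℝ => u p.1 p.2))
    (hu_schwartz : ∀ n m : ℕ, ∀ T : ℝ, ∃ C : ℝ, ∀ t x : ℝ, |t| ≤ T →
      |x| ^ n * ‖iteratedDeriv m (fun x' => u x' t) x‖ ≤ C)
    (hut_schwartz : ∀ n m : ℕ, ∀ T : ℝ, ∃ C : ℝ, ∀ t x : ℝ, |t| ≤ T →
      |x| ^ n * ‖iteratedDeriv m (fun x' => deriv (fun s => u x' s) t) x‖ ≤ C)
    (heq : ∀ x t : ℝ, (ε : ℂ) * deriv (fun s => u x s) t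
      - Complex.I * ε ^ 2 / 2 * iteratedDeriv 2 (fun x' => u x' t) x
      + Complex.I * ((a * x ^ 2 + b * x + c : ℝ) : ℂ) * u x t = 0) :
    ∀ x k t : ℝ,
      deriv (fun s => wigner ε (fun x' => u x' s) (fun x' => u x' s) x k) t
        + 2 * π * k * deriv (fun x' => wigner ε (fun y => u y t) (fun y => u y t) x' k) x
        - (2 * a * x + b) / (2 * π) *
            deriv (fun k' => wigner ε (fun y => u y t) (fun y => u y t) x k') k = 0 := by
  intro x k t
  have hε' : (ε:ℂ) ≠ 0 := Complex.ofReal_ne_zero.mpr hε.ne'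
  have hone_le : (1 : WithTop ℕ∞) ≤ (⊤ : ℕ∞) := by exact_mod_cast le_top
  have husm : ContDiff ℝ (⊤ : ℕ∞) (fun p : ℝ × ℝ => u p.1 p.2) := hu_smooth.of_le (by simp)
  have hslice : ∀ s : ℝ, ContDiff ℝ (⊤ : ℕ∞) (fun z : ℝ => u z s) := fun s =>
    husm.comp (contDiff_id.prodMk contDiff_const)
  have hslicet : ∀ z : ℝ, ContDiff ℝ (⊤ : ℕ∞) (fun r : ℝ => u z r) := fun z =>
    husm.comp (contDiff_const.prodMk contDiff_id)
  set T : ℝ := |t| + 1 with hT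
  have htT : |t| ≤ T := by rw [hT]; linarith
  obtain ⟨C0, hC0n, hC0'⟩ := decay_of_schwartz u hu_schwartz 0 3 T
  obtain ⟨C1, hC1n, hC1'⟩ := decay_of_schwartz u hu_schwartz 1 3 T
  obtain ⟨C2, hC2n, hC2'⟩ := decay_of_schwartz u hu_schwartz 2 3 T
  obtain ⟨C5, hC5n, hC5'⟩ := decay_of_schwartz u hu_schwartz 0 5 T
  have hu0 : ∀ s z : ℝ, |s| ≤ T → ‖u z s‖ * (1+|z|)^3 ≤ C0 := fun s z hs => by
    simpa [iteratedDeriv_zero] using hC0' s z hs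
  have hu1 : ∀ s z : ℝ, |s| ≤ T → ‖deriv (fun z' => u z' s) z‖ * (1+|z|)^3 ≤ C1 := fun s z hs => by
    simpa [iteratedDeriv_one] using hC1' s z hs
  have hu2 : ∀ s z : ℝ, |s| ≤ T → ‖iteratedDeriv 2 (fun z' => u z' s) z‖ * (1+|z|)^3 ≤ C2 :=
    fun s z hs => hC2' s z hs
  have hu5 : ∀ s z : ℝ, |s| ≤ T → ‖u z s‖ * (1+|z|)^5 ≤ C5 := fun s z hs => by
    simpa [iteratedDeriv_zero] using hC5' s z hs
  -- the Schrödinger equation solved for the time derivative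
  have hdtf : ∀ z s : ℝ, deriv (fun r => u z r) s
      = Complex.I * (ε:ℂ) / 2 * iteratedDeriv 2 (fun z' => u z' s) z
        - Complex.I / (ε:ℂ) * ((a*z^2+b*z+c : ℝ):ℂ) * u z s := by
    intro z s
    have h := heq z s
    field_simp at h ⊢
    linear_combination h
  have hdtfc : ∀ z s : ℝ, (starRingEnd ℂ) (deriv (fun r => u z r) s)
      = -(Complex.I * (ε:ℂ)) / 2 * (starRingEnd ℂ) (iteratedDeriv 2 (fun z' => u z' s) z)
        + Complex.I / (ε:ℂ) * ((a*z^2+b*z+c : ℝ):ℂ) * (starRingEnd ℂ) (u z s) := by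
    intro z s
    rw [hdtf z s]
    simp only [map_sub, map_mul, map_div₀, Complex.conj_I, Complex.conj_ofReal, map_ofNat]
    ring
  -- decay for the time derivative
  have habsV : ∀ z : ℝ, |a*z^2+b*z+c| ≤ (|a|+|b|+|c|) * (1+|z|)^2 := by
    intro z
    have h1 : |a*z^2+b*z+c| ≤ |a*z^2+b*z| + |c| := abs_add_le _ _
    have h2 : |a*z^2+b*z| ≤ |a*z^2| + |b*z| := abs_add_le _ _
    have h3 : |a*z^2| = |a| *z^2 := by rw [abs_mul, abs_of_nonneg (sq_nonneg z)]
    have h4 : |b*z| = |b| *|z| := abs_mul b z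
    nlinarith [abs_nonneg a, abs_nonneg b, abs_nonneg c, abs_nonneg z, sq_nonneg z, sq_abs z]
  have hdt3 : ∀ s z : ℝ, |s| ≤ T → ‖deriv (fun r => u z r) s‖ * (1+|z|)^3
      ≤ ε/2*C2 + (|a|+|b|+|c|)/ε*C5 := by
    intro s z hs
    rw [hdtf z s]
    have e1 : ‖Complex.I * (ε:ℂ) / 2 * iteratedDeriv 2 (fun z' => u z' s) z‖
        = ε/2 * ‖iteratedDeriv 2 (fun z' => u z' s) z‖ := by
      rw [norm_mul, norm_div, norm_mul]
      simp [abs_of_pos hε]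
    have e2 : ‖Complex.I / (ε:ℂ) * ((a*z^2+b*z+c : ℝ):ℂ) * u z s‖
        = (1/ε) * |a*z^2+b*z+c| * ‖u z s‖ := by
      simp only [norm_mul, norm_div, Complex.norm_I, Complex.norm_real, Real.norm_eq_abs]
      rw [abs_of_pos hε]
    have hn : ‖Complex.I * (ε:ℂ) / 2 * iteratedDeriv 2 (fun z' => u z' s) z
        - Complex.I / (ε:ℂ) * ((a*z^2+b*z+c : ℝ):ℂ) * u z s‖
        ≤ ε/2 * ‖iteratedDeriv 2 (fun z' => u z' s) z‖ + (1/ε) * |a*z^2+b*z+c| * ‖u z s‖ := by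
      calc ‖_ - _‖ ≤ _ + _ := norm_sub_le _ _
      _ = _ := by rw [e1, e2]
    have key2 : |a*z^2+b*z+c| * (‖u z s‖ * (1+|z|)^3) ≤ (|a|+|b|+|c|) * C5 := by
      have s1 : |a*z^2+b*z+c| * (‖u z s‖ * (1+|z|)^3)
          ≤ ((|a|+|b|+|c|) * (1+|z|)^2) * (‖u z s‖ * (1+|z|)^3) :=
        mul_le_mul_of_nonneg_right (habsV z) (by positivity)
      have s2 : ((|a|+|b|+|c|) * (1+|z|)^2) * (‖u z s‖ * (1+|z|)^3)
          = (|a|+|b|+|c|) * (‖u z s‖ * (1+|z|)^5) := by ring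
      have s3 : (|a|+|b|+|c|) * (‖u z s‖ * (1+|z|)^5) ≤ (|a|+|b|+|c|) * C5 :=
        mul_le_mul_of_nonneg_left (hu5 s z hs) (by positivity)
      linarith
    have m1 : ‖Complex.I * (ε:ℂ) / 2 * iteratedDeriv 2 (fun z' => u z' s) z
        - Complex.I / (ε:ℂ) * ((a*z^2+b*z+c : ℝ):ℂ) * u z s‖ * (1+|z|)^3
        ≤ (ε/2 * ‖iteratedDeriv 2 (fun z' => u z' s) z‖
            + (1/ε) * |a*z^2+b*z+c| * ‖u z s‖) * (1+|z|)^3 :=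
      mul_le_mul_of_nonneg_right hn (by positivity)
    have m2 : (ε/2 * ‖iteratedDeriv 2 (fun z' => u z' s) z‖
            + (1/ε) * |a*z^2+b*z+c| * ‖u z s‖) * (1+|z|)^3
        = ε/2 * (‖iteratedDeriv 2 (fun z' => u z' s) z‖ * (1+|z|)^3)
          + 1/ε * (|a*z^2+b*z+c| * (‖u z s‖ * (1+|z|)^3)) := by ring
    have m3 : ε/2 * (‖iteratedDeriv 2 (fun z' => u z' s) z‖ * (1+|z|)^3) ≤ ε/2*C2 :=
      mul_le_mul_of_nonneg_left (hu2 s z hs) (by positivity)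
    have m4 : 1/ε * (|a*z^2+b*z+c| * (‖u z s‖ * (1+|z|)^3)) ≤ 1/ε * ((|a|+|b|+|c|)*C5) :=
      mul_le_mul_of_nonneg_left key2 (by positivity)
    have m5 : 1/ε * ((|a|+|b|+|c|)*C5) = (|a|+|b|+|c|)/ε*C5 := by ring
    linarith
  -- continuity and differentiability facts
  have hcont_u : ∀ s : ℝ, Continuous fun z => u z s := fun s => (hslice s).continuous
  have hcont_du : ∀ s : ℝ, Continuous (deriv (fun z => u z s)) := fun s =>
    (hslice s).continuous_deriv hone_le
  have h2eq : ∀ s : ℝ, iteratedDeriv 2 (fun z : ℝ => u z s) = deriv (deriv (fun z => u z s)) := by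
    intro s; rw [iteratedDeriv_succ, iteratedDeriv_one]
  have hcdu : ∀ s : ℝ, ContDiff ℝ (⊤ : ℕ∞) (deriv (fun z : ℝ => u z s)) := fun s =>
    (contDiff_infty_iff_deriv.mp (hslice s)).2
  have hcont_d2 : ∀ s : ℝ, Continuous (iteratedDeriv 2 (fun z : ℝ => u z s)) := by
    intro s; rw [h2eq s]; exact (hcdu s).continuous_deriv hone_le
  have hdiffx : ∀ s : ℝ, Differentiable ℝ (fun z : ℝ => u z s) := fun s =>
    (hslice s).differentiable (by simp)
  have hdiffdu : ∀ s : ℝ, Differentiable ℝ (deriv (fun z : ℝ => u z s)) := fun s =>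
    (hcdu s).differentiable (by simp)
  have hdifft : ∀ z : ℝ, Differentiable ℝ (fun r : ℝ => u z r) := fun z =>
    (hslicet z).differentiable (by simp)
  have hcont_dt : ∀ s : ℝ, Continuous fun z => deriv (fun r => u z r) s := by
    intro s
    have e : (fun z => deriv (fun r => u z r) s) = fun z =>
        Complex.I * (ε:ℂ) / 2 * iteratedDeriv 2 (fun z' => u z' s) z
          - Complex.I / (ε:ℂ) * ((a*z^2+b*z+c : ℝ):ℂ) * u z s := funext fun z => hdtf z s
    rw [e]
    apply Continuous.sub
    · exact continuous_const.mul (hcont_d2 s)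
    · exact (continuous_const.mul (Complex.continuous_ofReal.comp (by fun_prop))).mul (hcont_u s)
  have hstarC : ∀ {g : ℝ → ℂ}, Continuous g → Continuous fun y => (starRingEnd ℂ) (g y) :=
    fun {g} hg => Complex.continuous_conj.comp hg
  have hcE : ∀ k' : ℝ, Continuous fun y : ℝ => Complex.exp (-(2 * ↑π * Complex.I * ↑k' * ↑y)) := by
    intro k'; apply Complex.continuous_exp.comp; fun_prop
  have haffp : ∀ x' : ℝ, Continuous fun y : ℝ => x' + ε * y / 2 := by intro x'; fun_prop
  have haffm : ∀ x' : ℝ, Continuous fun y : ℝ => x' - ε * y / 2 := by intro x'; fun_prop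
  -- x-derivative under the integral sign
  have key_x : HasDerivAt
      (fun x' : ℝ => ∫ y : ℝ, Complex.exp (-(2 * ↑π * Complex.I * ↑k * ↑y)) *
          u (x' + ε * y / 2) t * (starRingEnd ℂ) (u (x' - ε * y / 2) t))
      (∫ y : ℝ, Complex.exp (-(2 * ↑π * Complex.I * ↑k * ↑y)) *
          (deriv (fun z => u z t) (x + ε * y / 2) * (starRingEnd ℂ) (u (x - ε * y / 2) t)
            + u (x + ε * y / 2) t * (starRingEnd ℂ) (deriv (fun z => u z t) (x - ε * y / 2)))) x := by
    have main := hasDerivAt_integral_of_dominated_loc_of_deriv_le (μ := volume) (𝕜 := ℝ)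
      (F := fun (x' : ℝ) (y : ℝ) => Complex.exp (-(2 * ↑π * Complex.I * ↑k * ↑y)) *
          u (x' + ε * y / 2) t * (starRingEnd ℂ) (u (x' - ε * y / 2) t))
      (F' := fun (x' : ℝ) (y : ℝ) => Complex.exp (-(2 * ↑π * Complex.I * ↑k * ↑y)) *
          (deriv (fun z => u z t) (x' + ε * y / 2) * (starRingEnd ℂ) (u (x' - ε * y / 2) t)
            + u (x' + ε * y / 2) t * (starRingEnd ℂ) (deriv (fun z => u z t) (x' - ε * y / 2))))
      (x₀ := x) (bound := fun y : ℝ => (C1*C0 + C0*C1) * (1 + (ε/2*y)^2)⁻¹)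
      (Metric.ball_mem_nhds _ one_pos) ?_ ?_ ?_ ?_ ?_ ?_
    · exact main.2
    · refine Filter.Eventually.of_forall fun x' => ?_
      exact (((hcE k).mul ((hcont_u t).comp (haffp x'))).mul
        (hstarC ((hcont_u t).comp (haffm x')))).aestronglyMeasurable
    · refine integrable_of_decay_bound hε
        (((hcE k).mul ((hcont_u t).comp (haffp x))).mul (hstarC ((hcont_u t).comp (haffm x)))) (M := C0*C0) ?_
      intro y
      rw [norm_mul, norm_mul, norm_exp_wig, one_mul, RingHomIsometric.norm_map]
      exact bound_convert0 hε (by positivity)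
        (two_point_bound hε 3 (fun z => hu0 t z htT) (fun z => hu0 t z htT) x y)
    · exact (((hcE k).mul ((((hcont_du t).comp (haffp x)).mul (hstarC ((hcont_u t).comp (haffm x)))).add
        (((hcont_u t).comp (haffp x)).mul (hstarC ((hcont_du t).comp (haffm x)))))) ).aestronglyMeasurable
    · refine Filter.Eventually.of_forall fun y => ?_
      intro x' _
      rw [norm_mul, norm_exp_wig, one_mul]
      have t1 : ‖deriv (fun z => u z t) (x' + ε * y / 2)‖ * ‖u (x' - ε * y / 2) t‖
          ≤ (C1*C0) * (1 + (ε/2*y)^2)⁻¹ :=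
        bound_convert0 hε (by positivity)
          (two_point_bound hε 3 (fun z => hu1 t z htT) (fun z => hu0 t z htT) x' y)
      have t2 : ‖u (x' + ε * y / 2) t‖ * ‖deriv (fun z => u z t) (x' - ε * y / 2)‖
          ≤ (C0*C1) * (1 + (ε/2*y)^2)⁻¹ :=
        bound_convert0 hε (by positivity)
          (two_point_bound hε 3 (fun z => hu0 t z htT) (fun z => hu1 t z htT) x' y)
      calc ‖deriv (fun z => u z t) (x' + ε * y / 2) * (starRingEnd ℂ) (u (x' - ε * y / 2) t)
            + u (x' + ε * y / 2) t * (starRingEnd ℂ) (deriv (fun z => u z t) (x' - ε * y / 2))‖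
          ≤ ‖deriv (fun z => u z t) (x' + ε * y / 2) * (starRingEnd ℂ) (u (x' - ε * y / 2) t)‖
            + ‖u (x' + ε * y / 2) t * (starRingEnd ℂ) (deriv (fun z => u z t) (x' - ε * y / 2))‖ :=
            norm_add_le _ _
      _ = ‖deriv (fun z => u z t) (x' + ε * y / 2)‖ * ‖u (x' - ε * y / 2) t‖
            + ‖u (x' + ε * y / 2) t‖ * ‖deriv (fun z => u z t) (x' - ε * y / 2)‖ := by
            rw [norm_mul, norm_mul, RingHomIsometric.norm_map, RingHomIsometric.norm_map]
      _ ≤ (C1*C0) * (1 + (ε/2*y)^2)⁻¹ + (C0*C1) * (1 + (ε/2*y)^2)⁻¹ := add_le_add t1 t2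
      _ = (C1*C0 + C0*C1) * (1 + (ε/2*y)^2)⁻¹ := by ring
    · exact integrable_decay hε _
    · refine Filter.Eventually.of_forall fun y => ?_
      intro x' _
      have hp : HasDerivAt (fun x'' : ℝ => x'' + ε * y / 2) 1 x' := (hasDerivAt_id x').add_const _
      have hm : HasDerivAt (fun x'' : ℝ => x'' - ε * y / 2) 1 x' := (hasDerivAt_id x').sub_const _
      have hup : HasDerivAt (fun x'' : ℝ => u (x'' + ε * y / 2) t)
          (deriv (fun z => u z t) (x' + ε * y / 2)) x' :=
        HasDerivAt.comp_add_const x' (ε * y / 2) (((hdiffx t) (x' + ε * y / 2)).hasDerivAt)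
      have hum : HasDerivAt (fun x'' : ℝ => u (x'' - ε * y / 2) t)
          (deriv (fun z => u z t) (x' - ε * y / 2)) x' :=
        HasDerivAt.comp_sub_const x' (ε * y / 2) (((hdiffx t) (x' - ε * y / 2)).hasDerivAt)
      have humc : HasDerivAt (fun x'' : ℝ => (starRingEnd ℂ) (u (x'' - ε * y / 2) t))
          ((starRingEnd ℂ) (deriv (fun z => u z t) (x' - ε * y / 2))) x' := by
        simpa only [starRingEnd_apply] using hum.star
      have hall := (hup.const_mul (Complex.exp (-(2 * ↑π * Complex.I * ↑k * ↑y)))).mul humc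
      convert hall using 1
      · rfl
      · rfl
      ring
  -- k-derivative under the integral sign
  have key_k : HasDerivAt
      (fun k' : ℝ => ∫ y : ℝ, Complex.exp (-(2 * ↑π * Complex.I * ↑k' * ↑y)) *
          u (x + ε * y / 2) t * (starRingEnd ℂ) (u (x - ε * y / 2) t))
      (∫ y : ℝ, (-(2 * ↑π * Complex.I * ↑y)) * (Complex.exp (-(2 * ↑π * Complex.I * ↑k * ↑y)) *
          u (x + ε * y / 2) t * (starRingEnd ℂ) (u (x - ε * y / 2) t))) k := by
    have main := hasDerivAt_integral_of_dominated_loc_of_deriv_le (μ := volume) (𝕜 := ℝ)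
      (F := fun (k' : ℝ) (y : ℝ) => Complex.exp (-(2 * ↑π * Complex.I * ↑k' * ↑y)) *
          u (x + ε * y / 2) t * (starRingEnd ℂ) (u (x - ε * y / 2) t))
      (F' := fun (k' : ℝ) (y : ℝ) => (-(2 * ↑π * Complex.I * ↑y)) *
          (Complex.exp (-(2 * ↑π * Complex.I * ↑k' * ↑y)) *
            u (x + ε * y / 2) t * (starRingEnd ℂ) (u (x - ε * y / 2) t)))
      (x₀ := k) (bound := fun y : ℝ => (2*π*(2/ε*(C0*C0))) * (1 + (ε/2*y)^2)⁻¹)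
      (Metric.ball_mem_nhds _ one_pos) ?_ ?_ ?_ ?_ ?_ ?_
    · exact main.2
    · refine Filter.Eventually.of_forall fun k' => ?_
      exact (((hcE k').mul ((hcont_u t).comp (haffp x))).mul
        (hstarC ((hcont_u t).comp (haffm x)))).aestronglyMeasurable
    · refine integrable_of_decay_bound hε
        (((hcE k).mul ((hcont_u t).comp (haffp x))).mul (hstarC ((hcont_u t).comp (haffm x)))) (M := C0*C0) ?_
      intro y
      rw [norm_mul, norm_mul, norm_exp_wig, one_mul, RingHomIsometric.norm_map]
      exact bound_convert0 hε (by positivity)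
        (two_point_bound hε 3 (fun z => hu0 t z htT) (fun z => hu0 t z htT) x y)
    · refine Continuous.aestronglyMeasurable ?_
      exact (by fun_prop : Continuous fun y : ℝ => (-(2 * ↑π * Complex.I * (↑y:ℂ)))).mul
        (((hcE k).mul ((hcont_u t).comp (haffp x))).mul (hstarC ((hcont_u t).comp (haffm x))))
    · refine Filter.Eventually.of_forall fun y => ?_
      intro k' _
      have hnrm : ‖(-(2 * ↑π * Complex.I * (↑y:ℂ)))‖ = 2*π*|y| := by
        simp only [norm_neg, norm_mul, Complex.norm_I, Complex.norm_real, Real.norm_eq_abs,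
          Complex.norm_ofNat, mul_one]
        rw [abs_of_pos Real.pi_pos]
      rw [norm_mul, hnrm, norm_mul, norm_mul, norm_exp_wig, one_mul, RingHomIsometric.norm_map]
      have hb := bound_convert1 hε (mul_nonneg (norm_nonneg _) (norm_nonneg _))
        (two_point_bound hε 3 (fun z => hu0 t z htT) (fun z => hu0 t z htT) x y)
      calc 2*π*|y| * (‖u (x + ε * y / 2) t‖ * ‖u (x - ε * y / 2) t‖)
          = 2*π*(|y| * (‖u (x + ε * y / 2) t‖ * ‖u (x - ε * y / 2) t‖)) := by ring
      _ ≤ 2*π*((2/ε*(C0*C0)) * (1 + (ε/2*y)^2)⁻¹) :=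
          mul_le_mul_of_nonneg_left hb (by positivity)
      _ = (2*π*(2/ε*(C0*C0))) * (1 + (ε/2*y)^2)⁻¹ := by ring
    · exact integrable_decay hε _
    · refine Filter.Eventually.of_forall fun y => ?_
      intro k' _
      have h0 : HasDerivAt (fun k'' : ℝ => ((k'':ℝ):ℂ)) 1 k' := by
        simpa using (hasDerivAt_id k').ofReal_comp
      have h1 := h0.const_mul (-(2 * ↑π * Complex.I * (↑y:ℂ)))
      have funeq : (fun k'' : ℝ => -(2 * ↑π * Complex.I * (↑k'':ℂ) * (↑y:ℂ)))
          = fun k'' : ℝ => (-(2 * ↑π * Complex.I * (↑y:ℂ))) * ((k'':ℝ):ℂ) := by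
        funext k''; ring
      have hlin : HasDerivAt (fun k'' : ℝ => -(2 * ↑π * Complex.I * (↑k'':ℂ) * (↑y:ℂ)))
          (-(2 * ↑π * Complex.I * (↑y:ℂ))) k' := by
        rw [funeq]; simpa using h1
      have hexp := hlin.cexp
      have hall := (hexp.mul_const (u (x + ε * y / 2) t)).mul_const
        ((starRingEnd ℂ) (u (x - ε * y / 2) t))
      convert hall using 1
      · rfl
      ring
  -- t-derivative under the integral sign
  have key_t : HasDerivAt
      (fun s : ℝ => ∫ y : ℝ, Complex.exp (-(2 * ↑π * Complex.I * ↑k * ↑y)) *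
          u (x + ε * y / 2) s * (starRingEnd ℂ) (u (x - ε * y / 2) s))
      (∫ y : ℝ, Complex.exp (-(2 * ↑π * Complex.I * ↑k * ↑y)) *
          (deriv (fun r => u (x + ε * y / 2) r) t * (starRingEnd ℂ) (u (x - ε * y / 2) t)
            + u (x + ε * y / 2) t * (starRingEnd ℂ) (deriv (fun r => u (x - ε * y / 2) r) t))) t := by
    have main := hasDerivAt_integral_of_dominated_loc_of_deriv_le (μ := volume) (𝕜 := ℝ)
      (F := fun (s : ℝ) (y : ℝ) => Complex.exp (-(2 * ↑π * Complex.I * ↑k * ↑y)) *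
          u (x + ε * y / 2) s * (starRingEnd ℂ) (u (x - ε * y / 2) s))
      (F' := fun (s : ℝ) (y : ℝ) => Complex.exp (-(2 * ↑π * Complex.I * ↑k * ↑y)) *
          (deriv (fun r => u (x + ε * y / 2) r) s * (starRingEnd ℂ) (u (x - ε * y / 2) s)
            + u (x + ε * y / 2) s * (starRingEnd ℂ) (deriv (fun r => u (x - ε * y / 2) r) s)))
      (x₀ := t) (bound := fun y : ℝ =>
        ((ε/2*C2 + (|a|+|b|+|c|)/ε*C5)*C0 + C0*(ε/2*C2 + (|a|+|b|+|c|)/ε*C5)) * (1 + (ε/2*y)^2)⁻¹)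
      (Metric.ball_mem_nhds _ one_pos) ?_ ?_ ?_ ?_ ?_ ?_
    · exact main.2
    · refine Filter.Eventually.of_forall fun s => ?_
      exact (((hcE k).mul ((hcont_u s).comp (haffp x))).mul
        (hstarC ((hcont_u s).comp (haffm x)))).aestronglyMeasurable
    · refine integrable_of_decay_bound hε
        (((hcE k).mul ((hcont_u t).comp (haffp x))).mul (hstarC ((hcont_u t).comp (haffm x)))) (M := C0*C0) ?_
      intro y
      rw [norm_mul, norm_mul, norm_exp_wig, one_mul, RingHomIsometric.norm_map]
      exact bound_convert0 hε (by positivity)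
        (two_point_bound hε 3 (fun z => hu0 t z htT) (fun z => hu0 t z htT) x y)
    · refine Continuous.aestronglyMeasurable ?_
      exact (hcE k).mul ((((hcont_dt t).comp (haffp x)).mul (hstarC ((hcont_u t).comp (haffm x)))).add
        (((hcont_u t).comp (haffp x)).mul (hstarC ((hcont_dt t).comp (haffm x)))))
    · refine Filter.Eventually.of_forall fun y => ?_
      intro s hs
      have hsT : |s| ≤ T := by
        have h1 : |s - t| < 1 := by
          have := Metric.mem_ball.mp hs
          rwa [Real.dist_eq] at this
        have h2 : |s| - |t| ≤ |s - t| := abs_sub_abs_le_abs_sub s t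
        rw [hT]; linarith
      rw [norm_mul, norm_exp_wig, one_mul]
      have t1 : ‖deriv (fun r => u (x + ε * y / 2) r) s‖ * ‖u (x - ε * y / 2) s‖
          ≤ ((ε/2*C2 + (|a|+|b|+|c|)/ε*C5)*C0) * (1 + (ε/2*y)^2)⁻¹ :=
        bound_convert0 hε (by positivity)
          (two_point_bound hε 3 (A := fun z => deriv (fun r => u z r) s)
            (fun z => hdt3 s z hsT) (fun z => hu0 s z hsT) x y)
      have t2 : ‖u (x + ε * y / 2) s‖ * ‖deriv (fun r => u (x - ε * y / 2) r) s‖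
          ≤ (C0*(ε/2*C2 + (|a|+|b|+|c|)/ε*C5)) * (1 + (ε/2*y)^2)⁻¹ :=
        bound_convert0 hε (by positivity)
          (two_point_bound hε 3 (B := fun z => deriv (fun r => u z r) s)
            (fun z => hu0 s z hsT) (fun z => hdt3 s z hsT) x y)
      calc ‖deriv (fun r => u (x + ε * y / 2) r) s * (starRingEnd ℂ) (u (x - ε * y / 2) s)
            + u (x + ε * y / 2) s * (starRingEnd ℂ) (deriv (fun r => u (x - ε * y / 2) r) s)‖
          ≤ ‖deriv (fun r => u (x + ε * y / 2) r) s * (starRingEnd ℂ) (u (x - ε * y / 2) s)‖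
            + ‖u (x + ε * y / 2) s * (starRingEnd ℂ) (deriv (fun r => u (x - ε * y / 2) r) s)‖ :=
            norm_add_le _ _
      _ = ‖deriv (fun r => u (x + ε * y / 2) r) s‖ * ‖u (x - ε * y / 2) s‖
            + ‖u (x + ε * y / 2) s‖ * ‖deriv (fun r => u (x - ε * y / 2) r) s‖ := by
            rw [norm_mul, norm_mul, RingHomIsometric.norm_map, RingHomIsometric.norm_map]
      _ ≤ ((ε/2*C2 + (|a|+|b|+|c|)/ε*C5)*C0) * (1 + (ε/2*y)^2)⁻¹
            + (C0*(ε/2*C2 + (|a|+|b|+|c|)/ε*C5)) * (1 + (ε/2*y)^2)⁻¹ := add_le_add t1 t2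
      _ = ((ε/2*C2 + (|a|+|b|+|c|)/ε*C5)*C0 + C0*(ε/2*C2 + (|a|+|b|+|c|)/ε*C5))
            * (1 + (ε/2*y)^2)⁻¹ := by ring
    · exact integrable_decay hε _
    · refine Filter.Eventually.of_forall fun y => ?_
      intro s _
      have hgp : HasDerivAt (fun r : ℝ => u (x + ε * y / 2) r)
          (deriv (fun r => u (x + ε * y / 2) r) s) s := ((hdifft (x + ε * y / 2)) s).hasDerivAt
      have hgm : HasDerivAt (fun r : ℝ => u (x - ε * y / 2) r)
          (deriv (fun r => u (x - ε * y / 2) r) s) s := ((hdifft (x - ε * y / 2)) s).hasDerivAt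
      have hgmc : HasDerivAt (fun r : ℝ => (starRingEnd ℂ) (u (x - ε * y / 2) r))
          ((starRingEnd ℂ) (deriv (fun r => u (x - ε * y / 2) r) s)) s := by
        simpa only [starRingEnd_apply] using hgm.star
      have hall := (hgp.const_mul (Complex.exp (-(2 * ↑π * Complex.I * ↑k * ↑y)))).mul hgmc
      convert hall using 1
      · rfl
      · rfl
      ring
  -- derivative of the shifted arguments in y
  have hyd : ∀ y : ℝ, HasDerivAt (fun y' : ℝ => x + ε * y' / 2) (ε/2) y := by
    intro y
    have h0 := ((hasDerivAt_id y).const_mul (ε/2)).const_add x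
    have funeq : (fun y' : ℝ => x + ε * y' / 2) = fun y' : ℝ => x + (ε/2) * y' := by
      funext y'; ring
    rw [funeq]; simpa using h0
  have hymd : ∀ y : ℝ, HasDerivAt (fun y' : ℝ => x - ε * y' / 2) (-(ε/2)) y := by
    intro y
    have h0 := ((hasDerivAt_id y).const_mul (-(ε/2))).const_add x
    have funeq : (fun y' : ℝ => x - ε * y' / 2) = fun y' : ℝ => x + (-(ε/2)) * y' := by
      funext y'; ring
    rw [funeq]; simpa using h0
  -- φ and its derivative in y
  have hφd : ∀ y : ℝ, HasDerivAt
      (fun y' : ℝ => deriv (fun z => u z t) (x + ε * y' / 2) * (starRingEnd ℂ) (u (x - ε * y' / 2) t) + u (x + ε * y' / 2) t * (starRingEnd ℂ) (deriv (fun z => u z t) (x - ε * y' / 2)))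
      ((ε:ℂ)/2 * (iteratedDeriv 2 (fun z => u z t) (x + ε * y / 2) * (starRingEnd ℂ) (u (x - ε * y / 2) t) - u (x + ε * y / 2) t * (starRingEnd ℂ) (iteratedDeriv 2 (fun z => u z t) (x - ε * y / 2)))) y := by
    intro y
    have hup : HasDerivAt (fun y' : ℝ => u (x + ε * y' / 2) t)
        ((ε/2 : ℝ) • deriv (fun z => u z t) (x + ε * y / 2)) y :=
      HasDerivAt.scomp (𝕜 := ℝ) (g₁ := fun z => u z t) y (hg := ((hdiffx t) (x + ε * y / 2)).hasDerivAt) (hh := hyd y)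
    have hum : HasDerivAt (fun y' : ℝ => u (x - ε * y' / 2) t)
        ((-(ε/2) : ℝ) • deriv (fun z => u z t) (x - ε * y / 2)) y :=
      HasDerivAt.scomp (𝕜 := ℝ) (g₁ := fun z => u z t) y (hg := ((hdiffx t) (x - ε * y / 2)).hasDerivAt) (hh := hymd y)
    have hdup : HasDerivAt (fun y' : ℝ => deriv (fun z => u z t) (x + ε * y' / 2))
        ((ε/2 : ℝ) • deriv (deriv (fun z => u z t)) (x + ε * y / 2)) y :=
      HasDerivAt.scomp (𝕜 := ℝ) (g₁ := deriv (fun z => u z t)) y (hg := ((hdiffdu t) (x + ε * y / 2)).hasDerivAt) (hh := hyd y)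
    have hdum : HasDerivAt (fun y' : ℝ => deriv (fun z => u z t) (x - ε * y' / 2))
        ((-(ε/2) : ℝ) • deriv (deriv (fun z => u z t)) (x - ε * y / 2)) y :=
      HasDerivAt.scomp (𝕜 := ℝ) (g₁ := deriv (fun z => u z t)) y (hg := ((hdiffdu t) (x - ε * y / 2)).hasDerivAt) (hh := hymd y)
    have humc : HasDerivAt (fun y' : ℝ => (starRingEnd ℂ) (u (x - ε * y' / 2) t))
        ((starRingEnd ℂ) ((-(ε/2) : ℝ) • deriv (fun z => u z t) (x - ε * y / 2))) y := by
      simpa only [starRingEnd_apply] using hum.star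
    have hdumc : HasDerivAt (fun y' : ℝ => (starRingEnd ℂ) (deriv (fun z => u z t) (x - ε * y' / 2)))
        ((starRingEnd ℂ) ((-(ε/2) : ℝ) • deriv (deriv (fun z => u z t)) (x - ε * y / 2))) y := by
      simpa only [starRingEnd_apply] using hdum.star
    have hall := (hdup.mul humc).add (hup.mul hdumc)
    convert hall using 1
    · rfl
    · rfl
    rw [h2eq t]
    simp only [starRingEnd_apply, star_smul, star_trivial]
    simp only [Complex.real_smul]
    push_cast
    ring
  have hφcont : Continuous (fun y : ℝ => deriv (fun z => u z t) (x + ε * y / 2) * (starRingEnd ℂ) (u (x - ε * y / 2) t) + u (x + ε * y / 2) t * (starRingEnd ℂ) (deriv (fun z => u z t) (x - ε * y / 2))) :=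
    ((((hcont_du t).comp (haffp x)).mul (hstarC ((hcont_u t).comp (haffm x)))).add
      (((hcont_u t).comp (haffp x)).mul (hstarC ((hcont_du t).comp (haffm x)))))
  have hφbnd : ∀ y : ℝ, ‖deriv (fun z => u z t) (x + ε * y / 2) * (starRingEnd ℂ) (u (x - ε * y / 2) t) + u (x + ε * y / 2) t * (starRingEnd ℂ) (deriv (fun z => u z t) (x - ε * y / 2))‖ ≤ (C1*C0 + C0*C1) * (1 + (ε/2*y)^2)⁻¹ := by
    intro y
    have t1 : ‖deriv (fun z => u z t) (x + ε * y / 2)‖ * ‖u (x - ε * y / 2) t‖ ≤ (C1*C0) * (1 + (ε/2*y)^2)⁻¹ :=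
      bound_convert0 hε (by positivity)
        (two_point_bound hε 3 (fun z => hu1 t z htT) (fun z => hu0 t z htT) x y)
    have t2 : ‖u (x + ε * y / 2) t‖ * ‖deriv (fun z => u z t) (x - ε * y / 2)‖ ≤ (C0*C1) * (1 + (ε/2*y)^2)⁻¹ :=
      bound_convert0 hε (by positivity)
        (two_point_bound hε 3 (fun z => hu0 t z htT) (fun z => hu1 t z htT) x y)
    calc ‖deriv (fun z => u z t) (x + ε * y / 2) * (starRingEnd ℂ) (u (x - ε * y / 2) t) + u (x + ε * y / 2) t * (starRingEnd ℂ) (deriv (fun z => u z t) (x - ε * y / 2))‖ ≤ ‖deriv (fun z => u z t) (x + ε * y / 2) * (starRingEnd ℂ) (u (x - ε * y / 2) t)‖ + ‖u (x + ε * y / 2) t * (starRingEnd ℂ) (deriv (fun z => u z t) (x - ε * y / 2))‖ := norm_add_le _ _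
    _ = ‖deriv (fun z => u z t) (x + ε * y / 2)‖ * ‖u (x - ε * y / 2) t‖ + ‖u (x + ε * y / 2) t‖ * ‖deriv (fun z => u z t) (x - ε * y / 2)‖ := by
        rw [norm_mul, norm_mul, RingHomIsometric.norm_map, RingHomIsometric.norm_map]
    _ ≤ (C1*C0) * (1 + (ε/2*y)^2)⁻¹ + (C0*C1) * (1 + (ε/2*y)^2)⁻¹ := add_le_add t1 t2
    _ = (C1*C0 + C0*C1) * (1 + (ε/2*y)^2)⁻¹ := by ring
  have hφint : Integrable (fun y : ℝ => deriv (fun z => u z t) (x + ε * y / 2) * (starRingEnd ℂ) (u (x - ε * y / 2) t) + u (x + ε * y / 2) t * (starRingEnd ℂ) (deriv (fun z => u z t) (x - ε * y / 2))) :=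
    integrable_of_decay_bound hε hφcont hφbnd
  have hφ'cont : Continuous (fun y : ℝ => (ε:ℂ)/2 * (iteratedDeriv 2 (fun z => u z t) (x + ε * y / 2) * (starRingEnd ℂ) (u (x - ε * y / 2) t) - u (x + ε * y / 2) t * (starRingEnd ℂ) (iteratedDeriv 2 (fun z => u z t) (x - ε * y / 2)))) :=
    continuous_const.mul ((((hcont_d2 t).comp (haffp x)).mul (hstarC ((hcont_u t).comp (haffm x)))).sub
      (((hcont_u t).comp (haffp x)).mul (hstarC ((hcont_d2 t).comp (haffm x)))))
  have hφ'bnd : ∀ y : ℝ, ‖(ε:ℂ)/2 * (iteratedDeriv 2 (fun z => u z t) (x + ε * y / 2) * (starRingEnd ℂ) (u (x - ε * y / 2) t) - u (x + ε * y / 2) t * (starRingEnd ℂ) (iteratedDeriv 2 (fun z => u z t) (x - ε * y / 2)))‖ ≤ (ε/2*(C2*C0 + C0*C2)) * (1 + (ε/2*y)^2)⁻¹ := by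
    intro y
    have hnc : ‖((ε:ℂ)/2 : ℂ)‖ = ε/2 := by
      rw [norm_div]
      simp [Complex.norm_real, Real.norm_eq_abs, abs_of_pos hε]
    have t1 : ‖iteratedDeriv 2 (fun z => u z t) (x + ε * y / 2)‖ * ‖u (x - ε * y / 2) t‖ ≤ (C2*C0) * (1 + (ε/2*y)^2)⁻¹ :=
      bound_convert0 hε (by positivity)
        (two_point_bound hε 3 (fun z => hu2 t z htT) (fun z => hu0 t z htT) x y)
    have t2 : ‖u (x + ε * y / 2) t‖ * ‖iteratedDeriv 2 (fun z => u z t) (x - ε * y / 2)‖ ≤ (C0*C2) * (1 + (ε/2*y)^2)⁻¹ :=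
      bound_convert0 hε (by positivity)
        (two_point_bound hε 3 (fun z => hu0 t z htT) (fun z => hu2 t z htT) x y)
    have hsub : ‖iteratedDeriv 2 (fun z => u z t) (x + ε * y / 2) * (starRingEnd ℂ) (u (x - ε * y / 2) t) - u (x + ε * y / 2) t * (starRingEnd ℂ) (iteratedDeriv 2 (fun z => u z t) (x - ε * y / 2))‖
        ≤ ‖iteratedDeriv 2 (fun z => u z t) (x + ε * y / 2)‖ * ‖u (x - ε * y / 2) t‖ + ‖u (x + ε * y / 2) t‖ * ‖iteratedDeriv 2 (fun z => u z t) (x - ε * y / 2)‖ := by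
      calc ‖_ - _‖ ≤ ‖iteratedDeriv 2 (fun z => u z t) (x + ε * y / 2) * (starRingEnd ℂ) (u (x - ε * y / 2) t)‖ + ‖u (x + ε * y / 2) t * (starRingEnd ℂ) (iteratedDeriv 2 (fun z => u z t) (x - ε * y / 2))‖ := norm_sub_le _ _
      _ = _ := by rw [norm_mul, norm_mul, RingHomIsometric.norm_map, RingHomIsometric.norm_map]
    calc ‖(ε:ℂ)/2 * (iteratedDeriv 2 (fun z => u z t) (x + ε * y / 2) * (starRingEnd ℂ) (u (x - ε * y / 2) t) - u (x + ε * y / 2) t * (starRingEnd ℂ) (iteratedDeriv 2 (fun z => u z t) (x - ε * y / 2)))‖ = ε/2 * ‖iteratedDeriv 2 (fun z => u z t) (x + ε * y / 2) * (starRingEnd ℂ) (u (x - ε * y / 2) t) - u (x + ε * y / 2) t * (starRingEnd ℂ) (iteratedDeriv 2 (fun z => u z t) (x - ε * y / 2))‖ := by rw [norm_mul, hnc]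
    _ ≤ ε/2 * ((C2*C0) * (1 + (ε/2*y)^2)⁻¹ + (C0*C2) * (1 + (ε/2*y)^2)⁻¹) := by
        apply mul_le_mul_of_nonneg_left _ (by positivity)
        exact hsub.trans (add_le_add t1 t2)
    _ = (ε/2*(C2*C0 + C0*C2)) * (1 + (ε/2*y)^2)⁻¹ := by ring
  have hφ'int : Integrable (fun y : ℝ => (ε:ℂ)/2 * (iteratedDeriv 2 (fun z => u z t) (x + ε * y / 2) * (starRingEnd ℂ) (u (x - ε * y / 2) t) - u (x + ε * y / 2) t * (starRingEnd ℂ) (iteratedDeriv 2 (fun z => u z t) (x - ε * y / 2)))) :=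
    integrable_of_decay_bound hε hφ'cont hφ'bnd
  have hφdiff : Differentiable ℝ (fun y' : ℝ => deriv (fun z => u z t) (x + ε * y' / 2) * (starRingEnd ℂ) (u (x - ε * y' / 2) t) + u (x + ε * y' / 2) t * (starRingEnd ℂ) (deriv (fun z => u z t) (x - ε * y' / 2))) := fun y => (hφd y).differentiableAt
  have hderiv_eq : deriv (fun y' : ℝ => deriv (fun z => u z t) (x + ε * y' / 2) * (starRingEnd ℂ) (u (x - ε * y' / 2) t) + u (x + ε * y' / 2) t * (starRingEnd ℂ) (deriv (fun z => u z t) (x - ε * y' / 2))) = fun y : ℝ => (ε:ℂ)/2 * (iteratedDeriv 2 (fun z => u z t) (x + ε * y / 2) * (starRingEnd ℂ) (u (x - ε * y / 2) t) - u (x + ε * y / 2) t * (starRingEnd ℂ) (iteratedDeriv 2 (fun z => u z t) (x - ε * y / 2))) :=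
    funext fun y => (hφd y).deriv
  have hFT := Real.fourier_deriv (f := fun y' : ℝ => deriv (fun z => u z t) (x + ε * y' / 2) * (starRingEnd ℂ) (u (x - ε * y' / 2) t) + u (x + ε * y' / 2) t * (starRingEnd ℂ) (deriv (fun z => u z t) (x - ε * y' / 2))) hφint hφdiff
    (by rw [hderiv_eq]; exact hφ'int)
  have hFTk := congrFun hFT k
  rw [hderiv_eq] at hFTk
  simp only [Real.fourier_real_eq_integral_exp_smul, smul_eq_mul] at hFTk
  have hkerEq : ∀ y : ℝ, Complex.exp (↑(-2 * π * y * k) * Complex.I)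
      = Complex.exp (-(2 * ↑π * Complex.I * ↑k * ↑y)) := by
    intro y; congr 1; push_cast; ring
  simp only [hkerEq] at hFTk
  -- identify the three derivatives
  have e_t : deriv (fun s => wigner ε (fun x' => u x' s) (fun x' => u x' s) x k) t
      = ∫ y : ℝ, Complex.exp (-(2 * ↑π * Complex.I * ↑k * ↑y)) * (deriv (fun r => u (x + ε * y / 2) r) t * (starRingEnd ℂ) (u (x - ε * y / 2) t) + u (x + ε * y / 2) t * (starRingEnd ℂ) (deriv (fun r => u (x - ε * y / 2) r) t)) := by
    simp only [wigner]; exact key_t.deriv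
  have e_x : deriv (fun x' => wigner ε (fun y => u y t) (fun y => u y t) x' k) x
      = ∫ y : ℝ, Complex.exp (-(2 * ↑π * Complex.I * ↑k * ↑y)) * (deriv (fun z => u z t) (x + ε * y / 2) * (starRingEnd ℂ) (u (x - ε * y / 2) t) + u (x + ε * y / 2) t * (starRingEnd ℂ) (deriv (fun z => u z t) (x - ε * y / 2))) := by
    simp only [wigner]; exact key_x.deriv
  have e_k : deriv (fun k' => wigner ε (fun y => u y t) (fun y => u y t) x k') k
      = ∫ y : ℝ, (-(2 * ↑π * Complex.I * ↑y)) * (Complex.exp (-(2 * ↑π * Complex.I * ↑k * ↑y)) * u (x + ε * y / 2) t * (starRingEnd ℂ) (u (x - ε * y / 2) t)) := by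
    simp only [wigner]; exact key_k.deriv
  have hbase2 : Integrable (fun y : ℝ => (y:ℂ) * (Complex.exp (-(2 * ↑π * Complex.I * ↑k * ↑y)) * u (x + ε * y / 2) t * (starRingEnd ℂ) (u (x - ε * y / 2) t))) := by
    refine integrable_of_decay_bound hε ?_ (M := 2/ε*(C0*C0)) ?_
    · exact Complex.continuous_ofReal.mul (((hcE k).mul ((hcont_u t).comp (haffp x))).mul
        (hstarC ((hcont_u t).comp (haffm x))))
    · intro y
      rw [norm_mul, norm_mul, norm_mul, norm_exp_wig, one_mul, RingHomIsometric.norm_map,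
        Complex.norm_real, Real.norm_eq_abs]
      exact bound_convert1 hε (by positivity)
        (two_point_bound hε 3 (fun z => hu0 t z htT) (fun z => hu0 t z htT) x y)
  have hint1 : Integrable (fun y : ℝ => Complex.exp (-(2 * ↑π * Complex.I * ↑k * ↑y)) * ((ε:ℂ)/2 * (iteratedDeriv 2 (fun z => u z t) (x + ε * y / 2) * (starRingEnd ℂ) (u (x - ε * y / 2) t) - u (x + ε * y / 2) t * (starRingEnd ℂ) (iteratedDeriv 2 (fun z => u z t) (x - ε * y / 2))))) := by
    refine integrable_of_decay_bound hε ((hcE k).mul hφ'cont) (M := ε/2*(C2*C0 + C0*C2)) ?_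
    intro y
    rw [norm_mul, norm_exp_wig, one_mul]
    exact hφ'bnd y
  have hsplit : ∀ y : ℝ, Complex.exp (-(2 * ↑π * Complex.I * ↑k * ↑y)) * (deriv (fun r => u (x + ε * y / 2) r) t * (starRingEnd ℂ) (u (x - ε * y / 2) t) + u (x + ε * y / 2) t * (starRingEnd ℂ) (deriv (fun r => u (x - ε * y / 2) r) t))
      = Complex.I * (Complex.exp (-(2 * ↑π * Complex.I * ↑k * ↑y)) * ((ε:ℂ)/2 * (iteratedDeriv 2 (fun z => u z t) (x + ε * y / 2) * (starRingEnd ℂ) (u (x - ε * y / 2) t) - u (x + ε * y / 2) t * (starRingEnd ℂ) (iteratedDeriv 2 (fun z => u z t) (x - ε * y / 2)))))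
        + (-(Complex.I * ((2*a*x+b : ℝ):ℂ))) * ((y:ℂ) * (Complex.exp (-(2 * ↑π * Complex.I * ↑k * ↑y)) * u (x + ε * y / 2) t * (starRingEnd ℂ) (u (x - ε * y / 2) t))) := by
    intro y
    rw [hdtf (x + ε * y / 2) t, hdtfc (x - ε * y / 2) t]
    push_cast
    field_simp
    ring
  have e_t2 : (∫ y : ℝ, Complex.exp (-(2 * ↑π * Complex.I * ↑k * ↑y)) * (deriv (fun r => u (x + ε * y / 2) r) t * (starRingEnd ℂ) (u (x - ε * y / 2) t) + u (x + ε * y / 2) t * (starRingEnd ℂ) (deriv (fun r => u (x - ε * y / 2) r) t)))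
      = Complex.I * (∫ y : ℝ, Complex.exp (-(2 * ↑π * Complex.I * ↑k * ↑y)) * ((ε:ℂ)/2 * (iteratedDeriv 2 (fun z => u z t) (x + ε * y / 2) * (starRingEnd ℂ) (u (x - ε * y / 2) t) - u (x + ε * y / 2) t * (starRingEnd ℂ) (iteratedDeriv 2 (fun z => u z t) (x - ε * y / 2)))))
        + (-(Complex.I * ((2*a*x+b : ℝ):ℂ))) * ∫ y : ℝ, (y:ℂ) * (Complex.exp (-(2 * ↑π * Complex.I * ↑k * ↑y)) * u (x + ε * y / 2) t * (starRingEnd ℂ) (u (x - ε * y / 2) t)) := by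
    rw [integral_congr_ae (Filter.Eventually.of_forall hsplit),
      integral_add (hint1.const_mul Complex.I) (hbase2.const_mul _),
      integral_const_mul, integral_const_mul]
  have e_k2 : (∫ y : ℝ, (-(2 * ↑π * Complex.I * ↑y)) * (Complex.exp (-(2 * ↑π * Complex.I * ↑k * ↑y)) * u (x + ε * y / 2) t * (starRingEnd ℂ) (u (x - ε * y / 2) t)))
      = (-(2 * ↑π * Complex.I)) * ∫ y : ℝ, (y:ℂ) * (Complex.exp (-(2 * ↑π * Complex.I * ↑k * ↑y)) * u (x + ε * y / 2) t * (starRingEnd ℂ) (u (x - ε * y / 2) t)) := by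
    rw [← integral_const_mul]
    refine integral_congr_ae (Filter.Eventually.of_forall fun y => ?_)
    ring
  rw [e_t, e_t2, hFTk, e_x, e_k, e_k2]
  have hπc : ((π:ℝ):ℂ) ≠ 0 := Complex.ofReal_ne_zero.mpr Real.pi_ne_zero
  have hq : (2 * (a:ℂ) * (x:ℂ) + (b:ℂ)) / (2 * ((π:ℝ):ℂ))
        * (-(2 * ((π:ℝ):ℂ) * Complex.I) * (∫ y : ℝ, (y:ℂ) * (Complex.exp (-(2 * ↑π * Complex.I * ↑k * ↑y)) * u (x + ε * y / 2) t * (starRingEnd ℂ) (u (x - ε * y / 2) t))))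
      = -(Complex.I * (2 * (a:ℂ) * (x:ℂ) + (b:ℂ)) * (∫ y : ℝ, (y:ℂ) * (Complex.exp (-(2 * ↑π * Complex.I * ↑k * ↑y)) * u (x + ε * y / 2) t * (starRingEnd ℂ) (u (x - ε * y / 2) t)))) := by
    rw [div_mul_eq_mul_div, div_eq_iff (mul_ne_zero two_ne_zero hπc)]
    ring
  push_cast
  linear_combination (2 * ((π:ℝ):ℂ) * (k:ℂ) * (∫ y : ℝ, Complex.exp (-(2 * ↑π * Complex.I * ↑k * ↑y)) * (deriv (fun z => u z t) (x + ε * y / 2) * (starRingEnd ℂ) (u (x - ε * y / 2) t) + u (x + ε * y / 2) t * (starRingEnd ℂ) (deriv (fun z => u z t) (x - ε * y / 2))))) * Complex.I_sq - hq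
end
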